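/- Let (V, ω) be a real symplectic vector space and for a subspace W ⊆ V let U_W denote the group of symplectic automorphisms of V (linear automorphisms g with ω(gx, gy) = ω(x,y) for all x,y) that fix W^⊥ = {x ∈ V : ω(x,y) = 0 for all y ∈ W} pointwise. Then for isotropic subspaces I, J ⊆ V one has U_J ⊆ U_I if and only if J ⊆ I. -/

import Mathlib

/-!
For `v ∈ J` the symplectic transvection `x ↦ x + ω(x, v) v` lies in `U_J`. If it also lies in
`U_I`, then `ω(x, v) = 0` for every `x ∈ I^⊥`, so `v ∈ I^⊥⊥ = I` by nondegeneracy in finite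
dimension. The converse is the antitonicity of `W ↦ W^⊥`.
-/

variable {V : Type} [AddCommGroup V] [Module ℝ V]

/-- The `ω`-perpendicular of a subspace `W`: `W^⊥ = {x | ω(x, y) = 0 for all y ∈ W}`. -/
def perp (ω : V →ₗ[ℝ] V →ₗ[ℝ] ℝ) (W : Submodule ℝ V) : Submodule ℝ V where
  carrier := {x | ∀ y ∈ W, ω x y = 0}
  zero_mem' := by intro y _; simp
  add_mem' := by
    intro a b ha hb y hy
    simp [map_add, LinearMap.add_apply, ha y hy, hb y hy]
  smul_mem' := by
    intro c a ha y hy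
    simp [map_smul, LinearMap.smul_apply, ha y hy]

/-- The group `U_W` of symplectic automorphisms of `(V, ω)` fixing `W^⊥` pointwise,
as a set of linear automorphisms of `V`. -/
def sympFixingPerp (ω : V →ₗ[ℝ] V →ₗ[ℝ] ℝ) (W : Submodule ℝ V) : Set (V ≃ₗ[ℝ] V) :=
  {g | (∀ x y, ω (g x) (g y) = ω x y) ∧ ∀ x ∈ perp ω W, g x = x}

open LinearMap (BilinForm)

section Transvection

variable {R M : Type*} [CommRing R] [AddCommGroup M] [Module R M] {ω : M →ₗ[R] M →ₗ[R] R}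

def symplecticTransvection (hω : ω.IsAlt) (v : M) : M ≃ₗ[R] M :=
  LinearEquiv.transvection (f := ω.flip v) (hω.self_eq_zero v)

theorem symplecticTransvection_apply (hω : ω.IsAlt) (v x : M) :
    symplecticTransvection hω v x = x + ω x v • v :=
  rfl

theorem symplecticTransvection_apply_apply (hω : ω.IsAlt) (v x y : M) :
    ω (symplecticTransvection hω v x) (symplecticTransvection hω v y) = ω x y := by
  have hskew : ω v y = -ω y v := (hω.neg y v).symm
  simp only [symplecticTransvection_apply, map_add, map_smul, LinearMap.add_apply,
    LinearMap.smul_apply, smul_eq_mul, hω.self_eq_zero, hskew]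
  ring

theorem symplecticTransvection_apply_eq_self_iff [IsDomain R] [Module.IsTorsionFree R M]
    (hω : ω.IsAlt) {v : M} (hv : v ≠ 0) (x : M) :
    symplecticTransvection hω v x = x ↔ ω x v = 0 := by
  rw [symplecticTransvection_apply, add_eq_left, smul_eq_zero, or_iff_left hv]

end Transvection

variable {ω : V →ₗ[ℝ] V →ₗ[ℝ] ℝ}

theorem perp_antitone : Antitone (perp ω) :=
  fun _ _ h _ hx y hy => hx y (h hy)

theorem sympFixingPerp_mono {I J : Submodule ℝ V} (h : J ≤ I) :
    sympFixingPerp ω J ⊆ sympFixingPerp ω I :=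
  fun _ hg => ⟨hg.1, fun x hx => hg.2 x (perp_antitone h hx)⟩

theorem perp_eq_orthogonal (hω : ω.IsRefl) (W : Submodule ℝ V) :
    perp ω W = BilinForm.orthogonal ω W := by
  ext x
  exact ⟨fun hx y hy => hω x y (hx y hy), fun hx y hy => hω y x (hx y hy)⟩

theorem orthogonal_perp [FiniteDimensional ℝ V] (hω : ω.IsRefl) (hnd : ω.SeparatingLeft)
    (W : Submodule ℝ V) : BilinForm.orthogonal ω (perp ω W) = W := by
  rw [perp_eq_orthogonal hω]
  exact BilinForm.orthogonal_orthogonal (hω.nondegenerate_iff_separatingLeft.mpr hnd) hω W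

theorem symplecticTransvection_mem_sympFixingPerp (hω : ω.IsAlt) {W : Submodule ℝ V} {v : V}
    (hv : v ∈ W) : symplecticTransvection hω v ∈ sympFixingPerp ω W :=
  ⟨symplecticTransvection_apply_apply hω v, fun x hx => by
    rw [symplecticTransvection_apply, hx v hv, zero_smul, add_zero]⟩

theorem mem_orthogonal_perp_of_symplecticTransvection_mem (hω : ω.IsAlt) {W : Submodule ℝ V}
    {v : V} (hv : v ≠ 0) (hT : symplecticTransvection hω v ∈ sympFixingPerp ω W) :
    v ∈ BilinForm.orthogonal ω (perp ω W) :=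
  fun x hx => (symplecticTransvection_apply_eq_self_iff hω hv x).mp (hT.2 x hx)

theorem sympFixingPerp_subset_iff_general [FiniteDimensional ℝ V]
    (ω : V →ₗ[ℝ] V →ₗ[ℝ] ℝ)
    (halt : ∀ x, ω x x = 0)
    (hnondeg : ∀ x, (∀ y, ω x y = 0) → x = 0)
    (I J : Submodule ℝ V) :
    sympFixingPerp ω J ⊆ sympFixingPerp ω I ↔ J ≤ I := by
  refine ⟨fun h v hv => ?_, sympFixingPerp_mono⟩
  rcases eq_or_ne v 0 with rfl | hv0
  · exact I.zero_mem
  rw [← orthogonal_perp (LinearMap.IsAlt.isRefl halt) hnondeg I]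
  exact mem_orthogonal_perp_of_symplecticTransvection_mem halt hv0
    (h (symplecticTransvection_mem_sympFixingPerp halt hv))

/-- For isotropic subspaces `I, J` of a real symplectic vector space `(V, ω)` one has
`U_J ⊆ U_I` if and only if `J ⊆ I`, where `U_W` is the group of symplectic automorphisms
fixing `W^⊥` pointwise. -/
theorem sympFixingPerp_subset_iff [FiniteDimensional ℝ V]
    (ω : V →ₗ[ℝ] V →ₗ[ℝ] ℝ)
    (halt : ∀ x, ω x x = 0)
    (hnondeg : ∀ x, (∀ y, ω x y = 0) → x = 0)
    (I J : Submodule ℝ V)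
    (hI : ∀ x ∈ I, ∀ y ∈ I, ω x y = 0)
    (hJ : ∀ x ∈ J, ∀ y ∈ J, ω x y = 0) :
    sympFixingPerp ω J ⊆ sympFixingPerp ω I ↔ J ≤ I :=
  sympFixingPerp_subset_iff_general ω halt hnondeg I J
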